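/- Let H : ℝ → ℝ be continuous, let c ∈ (0, 1), and suppose 2·H(y) ≤ √(1 − y²) for all y ∈ [c, 1]. Let x, y : I → ℝ be differentiable on an interval I and satisfy x'(s) = y(s) and y'(s) = (1 − y(s)²)·coth(x(s)) − 2·H(y(s))·√(1 − y(s)²), with x(s) > 0 for all s ∈ I. Then at every s ∈ I with c ≤ y(s) < 1 one has y'(s) > 0. Consequently y is strictly increasing on any subinterval of I where c ≤ y < 1, and y never decreases below c after first reaching it. -/

import Mathlib

open Real Set

/-! The angle function `y` cannot stall on `[c, 1)`: there `√(1 - y²) > 0`, so the hypothesis on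
`H` bounds the mean-curvature term `2 H(y) √(1 - y²)` by `1 - y²`, while `coth x > 1` makes the
rotational term `(1 - y²) coth x` strictly larger. Hence `y' > 0` on `[c, 1)`; monotonicity
follows from the mean value theorem, and the barrier `y = c` cannot be crossed downwards by a
fencing argument. -/

/-- The real hyperbolic cotangent. -/
noncomputable def coth (t : ℝ) : ℝ := Real.cosh t / Real.sinh t

lemma one_lt_coth {t : ℝ} (ht : 0 < t) : 1 < coth t := by
  have hs : 0 < Real.sinh t := Real.sinh_pos_iff.2 ht
  rw [coth, lt_div_iff₀ hs, one_mul]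
  exact Real.sinh_lt_cosh t

lemma sub_mul_sqrt_one_sub_sq_pos {y k h : ℝ} (hy : y ^ 2 < 1) (hk : 1 < k)
    (hh : 2 * h ≤ √(1 - y ^ 2)) : 0 < (1 - y ^ 2) * k - 2 * h * √(1 - y ^ 2) := by
  have hpos : 0 < 1 - y ^ 2 := sub_pos.2 hy
  have hterm : 2 * h * √(1 - y ^ 2) ≤ 1 - y ^ 2 :=
    calc 2 * h * √(1 - y ^ 2) ≤ √(1 - y ^ 2) * √(1 - y ^ 2) :=
          mul_le_mul_of_nonneg_right hh (Real.sqrt_nonneg _)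
      _ = 1 - y ^ 2 := Real.mul_self_sqrt hpos.le
  nlinarith

lemma le_of_hasDerivAt_pos_of_eq {f f' : ℝ → ℝ} {a b c : ℝ}
    (hf : ∀ x ∈ Icc a b, HasDerivAt f (f' x) x) (ha : c ≤ f a)
    (hpos : ∀ x ∈ Ico a b, f x = c → 0 < f' x) : ∀ x ∈ Icc a b, c ≤ f x := by
  intro x hx
  have hneg := image_le_of_deriv_right_lt_deriv_boundary (f := -f) (f' := -f')
    (B := fun _ => -c) (B' := 0)
    (fun x hx => (hf x hx).continuousAt.neg.continuousWithinAt)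
    (fun x hx => (hf x (Ico_subset_Icc_self hx)).neg.hasDerivWithinAt)
    (neg_le_neg ha) (fun _ => hasDerivAt_const _ _)
    (fun x hx hx_eq => neg_neg_of_pos (hpos x hx (neg_inj.1 hx_eq))) hx
  exact neg_le_neg_iff.1 hneg

theorem confinement_hyperbolic_general
    (H : ℝ → ℝ)
    (c : ℝ) (hc : c ∈ Ioo (0 : ℝ) 1)
    (hH : ∀ y ∈ Icc c 1, 2 * H y ≤ Real.sqrt (1 - y ^ 2))
    (I : Set ℝ) (hI : I.OrdConnected)
    (x y : ℝ → ℝ)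
    (hy : ∀ s ∈ I, HasDerivAt y
      ((1 - y s ^ 2) * coth (x s) - 2 * H (y s) * Real.sqrt (1 - y s ^ 2)) s)
    (hxpos : ∀ s ∈ I, 0 < x s) :
    (∀ s ∈ I, c ≤ y s → y s < 1 → 0 < deriv y s) ∧
    (∀ s₁ ∈ I, ∀ s₂ ∈ I, s₁ < s₂ →
      (∀ s ∈ Icc s₁ s₂, c ≤ y s ∧ y s < 1) → y s₁ < y s₂) ∧
    (∀ s₁ ∈ I, ∀ s₂ ∈ I, s₁ ≤ s₂ → c ≤ y s₁ →
      (∀ s ∈ Icc s₁ s₂, y s < 1) → c ≤ y s₂) := by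
  have hderiv : ∀ s ∈ I, HasDerivAt y (deriv y s) s :=
    fun s hs => (hy s hs).differentiableAt.hasDerivAt
  have hpos : ∀ s ∈ I, c ≤ y s → y s < 1 → 0 < deriv y s := by
    intro s hs hcy hy1
    rw [(hy s hs).deriv]
    have hy_sq : y s ^ 2 < 1 := by nlinarith [hc.1]
    exact sub_mul_sqrt_one_sub_sq_pos hy_sq (one_lt_coth (hxpos s hs)) (hH _ ⟨hcy, hy1.le⟩)
  refine ⟨hpos, ?_, ?_⟩
  · intro s₁ hs₁ s₂ hs₂ h12 hband
    have hsub : Icc s₁ s₂ ⊆ I := hI.out hs₁ hs₂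
    refine strictMonoOn_of_deriv_pos (convex_Icc s₁ s₂)
      (fun s hs => (hderiv s (hsub hs)).continuousAt.continuousWithinAt) (fun s hs => ?_)
      (left_mem_Icc.2 h12.le) (right_mem_Icc.2 h12.le) h12
    have hs' := interior_subset hs
    exact hpos s (hsub hs') (hband s hs').1 (hband s hs').2
  · intro s₁ hs₁ s₂ hs₂ h12 hcy₁ hlt
    have hsub : Icc s₁ s₂ ⊆ I := hI.out hs₁ hs₂
    refine le_of_hasDerivAt_pos_of_eq (fun s hs => hderiv s (hsub hs)) hcy₁
      (fun s hs hys => ?_) s₂ (right_mem_Icc.2 h12)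
    have hs' := Ico_subset_Icc_self hs
    exact hpos s (hsub hs') hys.ge (hlt s hs')

/-- Confinement property in the phase plane of rotational `H`-surfaces in `ℍ² × ℝ`:
if `2 H(y) ≤ √(1 - y²)` for `y ∈ [c, 1]`, then every orbit has `y' > 0` whenever
`c ≤ y < 1`; consequently `y` is strictly increasing on any subinterval where
`c ≤ y < 1`, and never decreases below `c` after first reaching it. -/
theorem confinement_hyperbolic
    (H : ℝ → ℝ) (hHcont : Continuous H)
    (c : ℝ) (hc : c ∈ Ioo (0 : ℝ) 1)
    (hH : ∀ y ∈ Icc c 1, 2 * H y ≤ Real.sqrt (1 - y ^ 2))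
    (I : Set ℝ) (hI : I.OrdConnected)
    (x y : ℝ → ℝ)
    (hx : ∀ s ∈ I, HasDerivAt x (y s) s)
    (hy : ∀ s ∈ I, HasDerivAt y
      ((1 - y s ^ 2) * coth (x s) - 2 * H (y s) * Real.sqrt (1 - y s ^ 2)) s)
    (hxpos : ∀ s ∈ I, 0 < x s) :
    (∀ s ∈ I, c ≤ y s → y s < 1 → 0 < deriv y s) ∧
    (∀ s₁ ∈ I, ∀ s₂ ∈ I, s₁ < s₂ →
      (∀ s ∈ Icc s₁ s₂, c ≤ y s ∧ y s < 1) → y s₁ < y s₂) ∧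
    (∀ s₁ ∈ I, ∀ s₂ ∈ I, s₁ ≤ s₂ → c ≤ y s₁ →
      (∀ s ∈ Icc s₁ s₂, y s < 1) → c ≤ y s₂) :=
  confinement_hyperbolic_general H c hc hH I hI x y hy hxpos
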